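/- arXiv:2012.04756 — 2 statements merged into one kernel-verified Lean document; each statement's English description precedes it below -/
import Mathlib

section
/- Unitary Procrustes solution: for matrices U, X ∈ ℂ^{p×k}, if XᴴU has singular value decomposition A D Bᴴ with A, B unitary and D diagonal with nonnegative entries, then Z* = A Bᴴ minimizes ‖U − X Z‖_F over all unitary k×k matrices Z, and the minimum of ‖U − XZ‖_F² equals ‖U‖_F² + ‖X‖_F² − 2·tr(D). -/
open Matrix Complex Finset

noncomputable def frobNorm {m n : ℕ} (M : Matrix (Fin m) (Fin n) ℂ) : ℝ :=
  Real.sqrt (∑ i, ∑ j, ‖M i j‖ ^ 2)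

noncomputable def Ssq {m n : ℕ} (M : Matrix (Fin m) (Fin n) ℂ) : ℝ :=
  ∑ i, ∑ j, ‖M i j‖ ^ 2

lemma Ssq_nonneg {m n : ℕ} (M : Matrix (Fin m) (Fin n) ℂ) : 0 ≤ Ssq M := by
  apply Finset.sum_nonneg; intro i _; apply Finset.sum_nonneg; intro j _; positivity

lemma frob_sq {m n : ℕ} (M : Matrix (Fin m) (Fin n) ℂ) : frobNorm M ^ 2 = Ssq M :=
  Real.sq_sqrt (Ssq_nonneg M)

lemma star_mul_self_re (z : ℂ) : (star z * z).re = ‖z‖ ^ 2 := by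
  rw [Complex.star_def, mul_comm, Complex.mul_conj, Complex.ofReal_re,
    Complex.normSq_eq_norm_sq]

lemma Ssq_eq_trace {m n : ℕ} (M : Matrix (Fin m) (Fin n) ℂ) :
    Ssq M = (Matrix.trace (Mᴴ * M)).re := by
  simp only [Ssq, Matrix.trace, Matrix.diag, Matrix.mul_apply,
    Matrix.conjTranspose_apply, Complex.re_sum]
  conv_rhs => rw [Finset.sum_comm]
  exact Finset.sum_congr rfl fun i _ => Finset.sum_congr rfl fun j _ =>
    (star_mul_self_re (M i j)).symm

lemma Ssq_sub {m n : ℕ} (U V : Matrix (Fin m) (Fin n) ℂ) :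
    Ssq (U - V) = Ssq U + Ssq V - 2 * (Matrix.trace (Vᴴ * U)).re := by
  have htr : (Matrix.trace (Vᴴ * U)).re = ∑ i, ∑ j, (U i j * star (V i j)).re := by
    simp only [Matrix.trace, Matrix.diag, Matrix.mul_apply,
      Matrix.conjTranspose_apply, Complex.re_sum]
    conv_rhs => rw [Finset.sum_comm]
    exact Finset.sum_congr rfl fun i _ => Finset.sum_congr rfl fun j _ => by rw [mul_comm]
  have key : ∀ (z w : ℂ), ‖z - w‖ ^ 2 = ‖z‖ ^ 2 + ‖w‖ ^ 2 - 2 * (z * star w).re := by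
    intro z w
    have h := Complex.normSq_sub z w
    simp only [Complex.star_def]
    rw [Complex.sq_norm, Complex.sq_norm, Complex.sq_norm]
    exact h
  rw [htr]
  simp only [Ssq, Matrix.sub_apply, key, Finset.sum_sub_distrib,
    Finset.sum_add_distrib, Finset.mul_sum]

lemma diag_re_le_one {k : ℕ} (W : Matrix (Fin k) (Fin k) ℂ)
    (hW : W ∈ Matrix.unitaryGroup (Fin k) ℂ) (i : Fin k) : (W i i).re ≤ 1 := by
  have h1 : (W * Wᴴ) i i = 1 := by
    have := Matrix.mem_unitaryGroup_iff.mp hW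
    rw [Matrix.star_eq_conjTranspose] at this
    rw [this, Matrix.one_apply_eq]
  have e : (W * Wᴴ) i i = ∑ j, W i j * star (W i j) := by
    simp [Matrix.mul_apply, Matrix.conjTranspose_apply]
  have h2 : ∑ j, ‖W i j‖ ^ 2 = 1 := by
    have h3 : (∑ j, W i j * star (W i j)).re = 1 := by
      rw [← e, h1]; rfl
    rw [Complex.re_sum] at h3
    rw [← h3]
    exact Finset.sum_congr rfl fun j _ => by rw [mul_comm]; exact (star_mul_self_re _).symm
  have h3 : ‖W i i‖ ^ 2 ≤ 1 := by
    rw [← h2]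
    exact Finset.single_le_sum (f := fun j => ‖W i j‖ ^ 2) (fun j _ => by positivity)
      (Finset.mem_univ i)
  have h4 : ‖W i i‖ ≤ 1 := by nlinarith [norm_nonneg (W i i)]
  calc (W i i).re ≤ ‖W i i‖ := Complex.re_le_norm _
    _ ≤ 1 := h4

theorem unitary_procrustes {p k : ℕ} (U X : Matrix (Fin p) (Fin k) ℂ)
    (A B : Matrix (Fin k) (Fin k) ℂ) (d : Fin k → ℝ)
    (hA : A ∈ Matrix.unitaryGroup (Fin k) ℂ) (hB : B ∈ Matrix.unitaryGroup (Fin k) ℂ)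
    (hd : ∀ i, 0 ≤ d i)
    (hSVD : Xᴴ * U = A * Matrix.diagonal (fun i => (d i : ℂ)) * Bᴴ) :
    (∀ Z : Matrix (Fin k) (Fin k) ℂ, Z ∈ Matrix.unitaryGroup (Fin k) ℂ →
      frobNorm (U - X * (A * Bᴴ)) ≤ frobNorm (U - X * Z)) ∧
    frobNorm (U - X * (A * Bᴴ)) ^ 2
      = frobNorm U ^ 2 + frobNorm X ^ 2 - 2 * ∑ i, d i := by
  set D : Matrix (Fin k) (Fin k) ℂ := Matrix.diagonal (fun i => (d i : ℂ)) with hD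
  -- Ssq (X * Z) = Ssq X for unitary Z
  have hXZ : ∀ Z : Matrix (Fin k) (Fin k) ℂ, Z ∈ Matrix.unitaryGroup (Fin k) ℂ →
      Ssq (X * Z) = Ssq X := by
    intro Z hZ
    rw [Ssq_eq_trace, Ssq_eq_trace]
    have hZZ : Z * Zᴴ = 1 := by
      have := Matrix.mem_unitaryGroup_iff.mp hZ
      rwa [Matrix.star_eq_conjTranspose] at this
    have hteq : Matrix.trace ((X * Z)ᴴ * (X * Z)) = Matrix.trace (Xᴴ * X) := by
      rw [Matrix.conjTranspose_mul]
      calc Matrix.trace (Zᴴ * Xᴴ * (X * Z))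
          = Matrix.trace ((Xᴴ * (X * Z)) * Zᴴ) := by
            rw [Matrix.mul_assoc]; exact Matrix.trace_mul_comm _ _
        _ = Matrix.trace (Xᴴ * (X * (Z * Zᴴ))) := by simp only [Matrix.mul_assoc]
        _ = Matrix.trace (Xᴴ * X) := by rw [hZZ, Matrix.mul_one]
    rw [hteq]
  -- trace computation
  have htrZ : ∀ Z : Matrix (Fin k) (Fin k) ℂ,
      (Matrix.trace ((X * Z)ᴴ * U)).re = ∑ i, ((Bᴴ * (Zᴴ * A)) i i).re * d i := by
    intro Z
    have h0 : (X * Z)ᴴ * U = Zᴴ * (A * D * Bᴴ) := by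
      rw [Matrix.conjTranspose_mul, Matrix.mul_assoc, hSVD]
    rw [h0]
    have hteq : Matrix.trace (Zᴴ * (A * D * Bᴴ)) = Matrix.trace ((Bᴴ * (Zᴴ * A)) * D) := by
      calc Matrix.trace (Zᴴ * (A * D * Bᴴ))
          = Matrix.trace ((Zᴴ * A) * (D * Bᴴ)) := by simp only [Matrix.mul_assoc]
        _ = Matrix.trace ((D * Bᴴ) * (Zᴴ * A)) := Matrix.trace_mul_comm _ _
        _ = Matrix.trace (D * (Bᴴ * (Zᴴ * A))) := by simp only [Matrix.mul_assoc]
        _ = Matrix.trace ((Bᴴ * (Zᴴ * A)) * D) := Matrix.trace_mul_comm _ _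
    rw [hteq, Matrix.trace]
    simp only [Matrix.diag, hD, Matrix.mul_diagonal, Complex.re_sum]
    exact Finset.sum_congr rfl fun i _ => by simp [Complex.mul_re]
  have hA' : Aᴴ * A = 1 := by
    have := Matrix.mem_unitaryGroup_iff'.mp hA
    rwa [Matrix.star_eq_conjTranspose] at this
  have hB' : Bᴴ * B = 1 := by
    have := Matrix.mem_unitaryGroup_iff'.mp hB
    rwa [Matrix.star_eq_conjTranspose] at this
  have hZ0mem : A * Bᴴ ∈ Matrix.unitaryGroup (Fin k) ℂ := by
    have : (Bᴴ : Matrix (Fin k) (Fin k) ℂ) ∈ Matrix.unitaryGroup (Fin k) ℂ := by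
      rw [← Matrix.star_eq_conjTranspose]
      exact Unitary.star_mem hB
    exact mul_mem hA this
  have hW0 : Bᴴ * ((A * Bᴴ)ᴴ * A) = 1 := by
    rw [Matrix.conjTranspose_mul, Matrix.conjTranspose_conjTranspose]
    calc Bᴴ * (B * Aᴴ * A) = (Bᴴ * B) * (Aᴴ * A) := by simp only [Matrix.mul_assoc]
      _ = 1 := by rw [hA', hB', Matrix.one_mul]
  have hval : Ssq (U - X * (A * Bᴴ)) = Ssq U + Ssq X - 2 * ∑ i, d i := by
    rw [Ssq_sub, hXZ _ hZ0mem, htrZ, hW0]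
    simp
  constructor
  · intro Z hZ
    have hle : Ssq (U - X * (A * Bᴴ)) ≤ Ssq (U - X * Z) := by
      rw [hval, Ssq_sub, hXZ _ hZ, htrZ]
      have hWmem : Bᴴ * (Zᴴ * A) ∈ Matrix.unitaryGroup (Fin k) ℂ := by
        rw [← Matrix.star_eq_conjTranspose, ← Matrix.star_eq_conjTranspose]
        exact mul_mem (Unitary.star_mem hB) (mul_mem (Unitary.star_mem hZ) hA)
      have hsum : ∑ i, ((Bᴴ * (Zᴴ * A)) i i).re * d i ≤ ∑ i, d i := by
        apply Finset.sum_le_sum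
        intro i _
        have := diag_re_le_one _ hWmem i
        nlinarith [hd i]
      linarith
    show Real.sqrt (Ssq _) ≤ Real.sqrt (Ssq _)
    exact Real.sqrt_le_sqrt hle
  · rw [frob_sq, frob_sq, frob_sq, hval]
end

section
/- Squared-distance-to-orbit formula: for u, x ∈ ℂ^p, the squared distance from u to the orbit x̃ = {e^{iθ}x : θ ∈ ℝ} equals ‖u‖² + ‖x‖² − 2|xᴴu|; consequently, as a function of u this squared distance is differentiable at every u with xᴴu ≠ 0. -/
open Metric Complex

lemma trout_dist_sq_aux {p : ℕ} (x u : EuclideanSpace ℂ (Fin p)) (θ : ℝ) :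
    dist u (Complex.exp (θ * Complex.I) • x) ^ 2
      = ‖u‖ ^ 2 + ‖x‖ ^ 2 - 2 * (Complex.exp (θ * Complex.I) * (starRingEnd ℂ) (inner ℂ x u : ℂ)).re := by
  rw [dist_eq_norm, @norm_sub_sq ℂ]
  have h1 : (inner ℂ u (Complex.exp (θ * Complex.I) • x) : ℂ)
      = Complex.exp (θ * Complex.I) * (inner ℂ u x : ℂ) := inner_smul_right _ _ _
  rw [h1, norm_smul]
  have h2 : ‖Complex.exp (θ * Complex.I)‖ = 1 := by
    simpa using Complex.norm_exp_ofReal_mul_I θ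
  have h3 : (inner ℂ u x : ℂ) = (starRingEnd ℂ) (inner ℂ x u : ℂ) := (inner_conj_symm u x).symm
  rw [h3, h2]
  simp only [RCLike.re_to_complex]
  ring

lemma trout_C_nonneg {p : ℕ} (x u : EuclideanSpace ℂ (Fin p)) :
    0 ≤ ‖u‖ ^ 2 + ‖x‖ ^ 2 - 2 * ‖(inner ℂ x u : ℂ)‖ := by
  have h := norm_inner_le_norm (𝕜 := ℂ) x u
  nlinarith [sq_nonneg (‖u‖ - ‖x‖), h]

lemma trout_infDist_eq {p : ℕ} (x u : EuclideanSpace ℂ (Fin p)) :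
    Metric.infDist u {y | ∃ θ : ℝ, y = Complex.exp (θ * Complex.I) • x}
      = Real.sqrt (‖u‖ ^ 2 + ‖x‖ ^ 2 - 2 * ‖(inner ℂ x u : ℂ)‖) := by
  set S : Set (EuclideanSpace ℂ (Fin p)) :=
    {y | ∃ θ : ℝ, y = Complex.exp (θ * Complex.I) • x}
  set z : ℂ := (inner ℂ x u : ℂ) with hz
  set C : ℝ := ‖u‖ ^ 2 + ‖x‖ ^ 2 - 2 * ‖z‖ with hC
  have hCnn : 0 ≤ C := trout_C_nonneg x u
  have hne : S.Nonempty := ⟨Complex.exp ((0:ℝ) * Complex.I) • x, 0, rfl⟩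
  apply le_antisymm
  · -- use θ = arg z
    have hmem : Complex.exp ((z.arg : ℝ) * Complex.I) • x ∈ S := ⟨z.arg, rfl⟩
    have hd : dist u (Complex.exp ((z.arg : ℝ) * Complex.I) • x) ^ 2 = C := by
      rw [trout_dist_sq_aux]
      have hcz : (starRingEnd ℂ) z = (‖z‖ : ℂ) * Complex.exp (-(z.arg : ℝ) * Complex.I) := by
        conv_lhs => rw [← Complex.norm_mul_exp_arg_mul_I z]
        rw [map_mul, ← Complex.exp_conj, Complex.conj_ofReal]
        congr 2
        rw [map_mul, Complex.conj_ofReal, Complex.conj_I]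
        ring
      have : Complex.exp ((z.arg : ℝ) * Complex.I) * (starRingEnd ℂ) z = ((‖z‖ : ℝ) : ℂ) := by
        rw [hcz, mul_comm (((‖z‖ : ℝ)) : ℂ), ← mul_assoc, ← Complex.exp_add]
        ring_nf
        simp
      rw [this]
      simp [hC]
    have h4 : Metric.infDist u S ≤ dist u (Complex.exp ((z.arg : ℝ) * Complex.I) • x) :=
      Metric.infDist_le_dist_of_mem hmem
    calc Metric.infDist u S ≤ dist u (Complex.exp ((z.arg : ℝ) * Complex.I) • x) := h4
      _ = Real.sqrt C := by
          rw [← hd, Real.sqrt_sq dist_nonneg]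
  · rw [← not_lt]
    intro hlt
    obtain ⟨y, hyS, hdy⟩ := (Metric.infDist_lt_iff hne).mp hlt
    obtain ⟨θ, rfl⟩ := hyS
    have hd := trout_dist_sq_aux x u θ
    have hre : (Complex.exp (θ * Complex.I) * (starRingEnd ℂ) z).re ≤ ‖z‖ := by
      calc (Complex.exp (θ * Complex.I) * (starRingEnd ℂ) z).re
          ≤ ‖Complex.exp (θ * Complex.I) * (starRingEnd ℂ) z‖ := Complex.re_le_norm _
        _ = ‖z‖ := by
            rw [norm_mul]
            simp [Complex.norm_exp_ofReal_mul_I]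
    have h1 : C ≤ dist u (Complex.exp (θ * Complex.I) • x) ^ 2 := by
      rw [hd]; linarith
    have : Real.sqrt C ≤ dist u (Complex.exp (θ * Complex.I) • x) := by
      calc Real.sqrt C ≤ Real.sqrt (dist u (Complex.exp (θ * Complex.I) • x) ^ 2) :=
            Real.sqrt_le_sqrt h1
        _ = dist u (Complex.exp (θ * Complex.I) • x) := Real.sqrt_sq dist_nonneg
    exact absurd hdy (not_lt.mpr this)

theorem trout_sq_dist_orbit_differentiable {p : ℕ} (x : EuclideanSpace ℂ (Fin p)) :
    (∀ u : EuclideanSpace ℂ (Fin p),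
      (Metric.infDist u {y | ∃ θ : ℝ, y = Complex.exp (θ * Complex.I) • x}) ^ 2
        = ‖u‖ ^ 2 + ‖x‖ ^ 2 - 2 * ‖(inner ℂ x u : ℂ)‖) ∧
    (∀ u : EuclideanSpace ℂ (Fin p), (inner ℂ x u : ℂ) ≠ 0 →
      DifferentiableAt ℝ
        (fun v : EuclideanSpace ℂ (Fin p) =>
          (Metric.infDist v {y | ∃ θ : ℝ, y = Complex.exp (θ * Complex.I) • x}) ^ 2) u) := by
  have key : ∀ u : EuclideanSpace ℂ (Fin p),
      (Metric.infDist u {y | ∃ θ : ℝ, y = Complex.exp (θ * Complex.I) • x}) ^ 2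
        = ‖u‖ ^ 2 + ‖x‖ ^ 2 - 2 * ‖(inner ℂ x u : ℂ)‖ := fun u => by
    rw [trout_infDist_eq x u, Real.sq_sqrt (trout_C_nonneg x u)]
  refine ⟨key, fun u hu => ?_⟩
  have hfun : (fun v : EuclideanSpace ℂ (Fin p) =>
      (Metric.infDist v {y | ∃ θ : ℝ, y = Complex.exp (θ * Complex.I) • x}) ^ 2)
      = fun v => ‖v‖ ^ 2 + ‖x‖ ^ 2 - 2 * ‖(inner ℂ x v : ℂ)‖ := funext key
  rw [hfun]
  have h1 : DifferentiableAt ℝ (fun v : EuclideanSpace ℂ (Fin p) => ‖v‖ ^ 2) u :=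
    (differentiableAt_id.norm_sq ℝ)
  have hlin : DifferentiableAt ℝ (fun v : EuclideanSpace ℂ (Fin p) => (inner ℂ x v : ℂ)) u :=
    ((innerSL ℂ x).differentiableAt).restrictScalars ℝ
  have h2 : DifferentiableAt ℝ (fun v : EuclideanSpace ℂ (Fin p) => ‖(inner ℂ x v : ℂ)‖) u :=
    hlin.norm ℝ hu
  exact (h1.add_const _).sub ((h2.const_mul 2))
end
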